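/- arXiv:2501.04867 — 6 statements merged into one kernel-verified Lean document; each statement's English description precedes it below -/
import Mathlib

section
/- (Second theorem of Poncelet) Let E be an ellipse with a focus at the point O, and let A and B be two points on E. Let the tangent lines to E at A and B intersect at a point C. Then the angle ∠AOC equals the angle ∠BOC, i.e. the line OC bisects the angle ∠AOB. -/
open EuclideanGeometry Module

/-!
Reflect the focus `F₁` in the tangent line at `A` to get `A'`. The tangent is a supporting line
of the ellipse, so `A` minimizes `dist · F₁ + dist · F₂ = dist · A' + dist · F₂` along it; since
the foci lie on the same side of the tangent, `A'` and `F₂` lie on opposite sides, and Heron's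
reflection principle puts `A` on the segment `A'F₂`. Hence `dist F₂ A' = 2a`,
`dist C A' = dist C F₁` and `∠ A F₁ C = ∠ F₂ A' C`. Doing the same at `B`, the triangles
`F₂A'C` and `F₂B'C` are congruent by SSS, so their angles at `A'` and `B'` agree.
-/

section NormedSpace

variable {V P : Type*} [NormedAddCommGroup V] [NormedSpace ℝ V] [MetricSpace P]
  [NormedAddTorsor V P]

theorem exists_pos_dist_add_dist_smul_vadd_eq {v : V} (hv : v ≠ 0) {Q F₁ F₂ : P} {c : ℝ}
    (hQ : dist Q F₁ + dist Q F₂ < c) :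
    ∃ t : ℝ, 0 < t ∧ dist (t • v +ᵥ Q) F₁ + dist (t • v +ᵥ Q) F₂ = c := by
  set g : ℝ → ℝ := fun t => dist (t • v +ᵥ Q) F₁ + dist (t • v +ᵥ Q) F₂ with hg_def
  have hg : Continuous g := by fun_prop
  have hg₀ : g 0 = dist Q F₁ + dist Q F₂ := by simp only [hg_def, zero_smul, zero_vadd]
  have hv' : 0 < ‖v‖ := norm_pos_iff.2 hv
  set T := (c + dist Q F₁) / ‖v‖
  have hT : 0 ≤ T :=
    div_nonneg (by linarith [dist_nonneg (x := Q) (y := F₁), dist_nonneg (x := Q) (y := F₂)]) hv'.le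
  have hgT : c ≤ g T :=
    calc c = dist (T • v +ᵥ Q) Q - dist Q F₁ := by
          rw [dist_vadd_left, norm_smul, Real.norm_of_nonneg hT, div_mul_cancel₀ _ hv'.ne']
          ring
      _ ≤ dist (T • v +ᵥ Q) F₁ := by
          linarith [dist_triangle (T • v +ᵥ Q) F₁ Q, dist_comm F₁ Q]
      _ ≤ g T := le_add_of_nonneg_right dist_nonneg
  obtain ⟨t, ht, hgt⟩ := intermediate_value_Icc hT hg.continuousOn ⟨hg₀ ▸ hQ.le, hgT⟩
  refine ⟨t, lt_of_le_of_ne ht.1 ?_, hgt⟩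
  rintro rfl
  exact hQ.ne (hg₀ ▸ hgt)

theorem le_dist_add_dist_of_inter_subsingleton {s : AffineSubspace ℝ P} (hs : s.direction ≠ ⊥)
    {F₁ F₂ : P} {c : ℝ} (hsub : ((s : Set P) ∩ {X | dist X F₁ + dist X F₂ = c}).Subsingleton)
    {Q : P} (hQ : Q ∈ s) : c ≤ dist Q F₁ + dist Q F₂ := by
  by_contra! hlt
  -- moving from `Q` along `v` and along `-v` reaches the level set at two distinct points
  obtain ⟨v, hvs, hv⟩ := Submodule.exists_mem_ne_zero_of_ne_bot hs
  have hmem : ∀ w ∈ s.direction, w +ᵥ Q ∈ s := fun w hw =>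
    AffineSubspace.vadd_mem_of_mem_direction hw hQ
  obtain ⟨t, ht, hPt⟩ := exists_pos_dist_add_dist_smul_vadd_eq hv hlt
  obtain ⟨u, hu, hPu⟩ := exists_pos_dist_add_dist_smul_vadd_eq (neg_ne_zero.2 hv) hlt
  have heq : t • v +ᵥ Q = u • -v +ᵥ Q :=
    hsub ⟨hmem _ (s.direction.smul_mem t hvs), hPt⟩
      ⟨hmem _ (s.direction.smul_mem u (s.direction.neg_mem hvs)), hPu⟩
  have hzero : (t + u) • v = 0 := by
    rw [add_smul, ← sub_neg_eq_add, ← smul_neg, vadd_right_cancel Q heq, sub_self]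
  exact (smul_ne_zero (by positivity) hv) hzero

end NormedSpace

section InnerProductSpace

variable {V P : Type*} [NormedAddCommGroup V] [InnerProductSpace ℝ V] [MetricSpace P]
  [NormedAddTorsor V P]

theorem AffineSubspace.wSameSide_or_wOppSide_of_finrank_orthogonal_eq_one
    (s : AffineSubspace ℝ P) [Nonempty s] [s.direction.HasOrthogonalProjection]
    (hs : finrank ℝ s.directionᗮ = 1) (x y : P) : s.WSameSide x y ∨ s.WOppSide x y := by
  by_cases hx : x ∈ s
  · exact Or.inl (wSameSide_of_left_mem y hx)
  set p₁ : P := ↑(orthogonalProjection s x)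
  set p₂ : P := ↑(orthogonalProjection s y)
  have hu : (⟨x -ᵥ p₁, vsub_orthogonalProjection_mem_direction_orthogonal s x⟩ :
      s.directionᗮ) ≠ 0 :=
    fun h => hx (vsub_eq_zero_iff_eq.1 (congrArg Subtype.val h) ▸ orthogonalProjection_mem x)
  obtain ⟨r, hr⟩ := (finrank_eq_one_iff_of_nonzero' _ hu).1 hs
    ⟨y -ᵥ p₂, vsub_orthogonalProjection_mem_direction_orthogonal s y⟩
  have hr : r • (x -ᵥ p₁) = y -ᵥ p₂ := congrArg Subtype.val hr
  rcases le_total 0 r with hr₀ | hr₀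
  · refine Or.inl ((wSameSide_iff_exists_left (orthogonalProjection_mem x)).2
      (Or.inr ⟨p₂, orthogonalProjection_mem y, ?_⟩))
    exact hr ▸ SameRay.sameRay_nonneg_smul_right _ hr₀
  · refine Or.inr ((wOppSide_iff_exists_left (orthogonalProjection_mem x)).2
      (Or.inr ⟨p₂, orthogonalProjection_mem y, ?_⟩))
    rw [← neg_vsub_eq_vsub_rev y p₂, ← hr, ← neg_smul]
    exact SameRay.sameRay_nonneg_smul_right _ (neg_nonneg.2 hr₀)

theorem finrank_orthogonal_direction_affineSpan_pair (hV : finrank ℝ V = 2) {A C : P}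
    (hAC : A ≠ C) : finrank ℝ (line[ℝ, A, C]).directionᗮ = 1 := by
  have := Module.finite_of_finrank_eq_succ hV
  have h := Submodule.finrank_add_finrank_orthogonal (line[ℝ, A, C]).direction
  rw [direction_affineSpan, vectorSpan_pair] at h ⊢
  rw [finrank_span_singleton (vsub_ne_zero.2 hAC), hV] at h
  omega

theorem wbtw_reflection_of_forall_le (s : AffineSubspace ℝ P) [Nonempty s]
    [s.direction.HasOrthogonalProjection] (hs : finrank ℝ s.directionᗮ = 1) {F₁ F₂ A : P}
    (hA : A ∈ s) (hmin : ∀ Q ∈ s, dist A F₁ + dist A F₂ ≤ dist Q F₁ + dist Q F₂)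
    (hfoci : dist F₁ F₂ < dist A F₁ + dist A F₂) : Wbtw ℝ (reflection s F₁) A F₂ := by
  have hF₁ : F₁ ∉ s := fun h => by
    have := hmin F₁ h
    rw [dist_self] at this
    linarith
  have hnopp : ¬ s.WOppSide F₁ F₂ := fun h => by
    obtain ⟨p, hp, hw⟩ := AffineSubspace.wOppSide_iff_exists_wbtw.1 h
    have := hmin p hp
    rw [dist_comm p F₁, hw.dist_add_dist] at this
    linarith
  have hsame := (s.wSameSide_or_wOppSide_of_finrank_orthogonal_eq_one hs F₁ F₂).resolve_right hnopp
  have hrefl : s.SOppSide F₁ (reflection s F₁) := by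
    rw [reflection_apply']
    exact AffineSubspace.sOppSide_pointReflection (orthogonalProjection_mem F₁) hF₁
  obtain ⟨Q, hQ, hw⟩ := AffineSubspace.wOppSide_iff_exists_wbtw.1
    ((AffineSubspace.wSameSide_comm.1 hsame).trans_wOppSide hrefl.wOppSide hF₁)
  rw [← dist_add_dist_eq_iff]
  refine le_antisymm ?_ (dist_triangle _ _ _)
  calc dist (reflection s F₁) A + dist A F₂ = dist A F₁ + dist A F₂ := by
        rw [dist_comm, dist_reflection_eq_of_mem s hA]
    _ ≤ dist Q F₁ + dist Q F₂ := hmin Q hQ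
    _ = dist (reflection s F₁) F₂ := by
        rw [← dist_reflection_eq_of_mem s hQ, dist_comm Q F₂, dist_comm _ F₂, add_comm,
          hw.dist_add_dist]

theorem angle_eq_angle_reflection_of_wbtw (s : AffineSubspace ℝ P) [Nonempty s]
    [s.direction.HasOrthogonalProjection] {F₁ F₂ A C : P} (hA : A ∈ s) (hC : C ∈ s)
    (hF₁ : F₁ ∉ s) (h : Wbtw ℝ (reflection s F₁) A F₂) :
    ∠ A F₁ C = ∠ F₂ (reflection s F₁) C := by
  have hne : A ≠ reflection s F₁ := fun h' => hF₁ <| by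
    have h'' := congrArg (reflection s) h'
    rw [reflection_reflection, (reflection_eq_self_iff A).2 hA] at h''
    exact h'' ▸ hA
  calc ∠ A F₁ C = ∠ A (reflection s F₁) C := by
        have h' := (reflection s).toAffineIsometry.angle_map A F₁ C
        rwa [AffineIsometryEquiv.coe_toAffineIsometry, (reflection_eq_self_iff A).2 hA,
          (reflection_eq_self_iff C).2 hC, eq_comm] at h'
    _ = ∠ F₂ (reflection s F₁) C := h.angle_eq_left C hne

theorem dist_reflection_eq_and_angle_eq_of_tangent (hV : finrank ℝ V = 2) {F₁ F₂ A C : P}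
    {c : ℝ} (hfoci : dist F₁ F₂ < c) (hA : dist A F₁ + dist A F₂ = c) (hAC : A ≠ C)
    (htan : ∀ X, dist X F₁ + dist X F₂ = c → X ∈ line[ℝ, A, C] → X = A) :
    dist F₂ (reflection line[ℝ, A, C] F₁) = c ∧
      ∠ A F₁ C = ∠ F₂ (reflection line[ℝ, A, C] F₁) C := by
  set s := line[ℝ, A, C]
  have hAs : A ∈ s := left_mem_affineSpan_pair ℝ A C
  have hdir : s.direction ≠ ⊥ := by
    rw [direction_affineSpan, vectorSpan_pair, Ne, Submodule.span_singleton_eq_bot]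
    exact vsub_ne_zero.2 hAC
  have hout : ∀ Q ∈ s, c ≤ dist Q F₁ + dist Q F₂ :=
    fun Q => le_dist_add_dist_of_inter_subsingleton hdir
      fun X hX Y hY => (htan X hX.2 hX.1).trans (htan Y hY.2 hY.1).symm
  have hF₁ : F₁ ∉ s := fun h => by
    have := hout F₁ h
    rw [dist_self] at this
    linarith
  have hw := wbtw_reflection_of_forall_le s (finrank_orthogonal_direction_affineSpan_pair hV hAC)
    hAs (hA ▸ hout) (hA ▸ hfoci)
  refine ⟨?_, angle_eq_angle_reflection_of_wbtw s hAs (right_mem_affineSpan_pair ℝ A C) hF₁ hw⟩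
  rw [dist_comm, ← hw.dist_add_dist, dist_comm _ A, dist_reflection_eq_of_mem s hAs, hA]

end InnerProductSpace

theorem stmt_4_general (F₁ F₂ : EuclideanSpace ℝ (Fin 2)) (a : ℝ)
    (hfoci : dist F₁ F₂ < 2 * a)
    (E : Set (EuclideanSpace ℝ (Fin 2)))
    (hE : E = {P | dist P F₁ + dist P F₂ = 2 * a})
    (A B C : EuclideanSpace ℝ (Fin 2))
    (hA : A ∈ E) (hB : B ∈ E) (hAC : A ≠ C) (hBC : B ≠ C)
    (htanA : ∀ P ∈ E, P ∈ affineSpan ℝ ({A, C} : Set (EuclideanSpace ℝ (Fin 2))) → P = A)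
    (htanB : ∀ P ∈ E, P ∈ affineSpan ℝ ({B, C} : Set (EuclideanSpace ℝ (Fin 2))) → P = B) :
    ∠ A F₁ C = ∠ B F₁ C := by
  subst hE
  have hV : finrank ℝ (EuclideanSpace ℝ (Fin 2)) = 2 := finrank_euclideanSpace_fin
  obtain ⟨hA', hAangle⟩ := dist_reflection_eq_and_angle_eq_of_tangent hV hfoci hA hAC htanA
  obtain ⟨hB', hBangle⟩ := dist_reflection_eq_and_angle_eq_of_tangent hV hfoci hB hBC htanB
  have hCA' := dist_reflection_eq_of_mem _ (right_mem_affineSpan_pair ℝ A C) F₁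
  have hCB' := dist_reflection_eq_of_mem _ (right_mem_affineSpan_pair ℝ B C) F₁
  rw [hAangle, hBangle]
  refine angle_eq_of_congruent (side_side_side (hA'.trans hB'.symm) ?_ rfl) 0 1 2
  rw [dist_comm _ C, hCA', dist_comm _ C, hCB']

/-- Second theorem of Poncelet: let `E` be an ellipse with foci `F₁, F₂` (so `O = F₁` is a
focus), let `A ≠ B` be points of `E`, and let `C` be the intersection point of the tangent
lines to `E` at `A` and at `B` (the line `AC` meets `E` only at `A`, and the line `BC`
meets `E` only at `B`). Then `∠ A O C = ∠ B O C`, i.e. `OC` bisects the angle `∠ A O B`. -/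
theorem stmt_4 (F₁ F₂ : EuclideanSpace ℝ (Fin 2)) (a : ℝ) (ha : 0 < a)
    (hfoci : dist F₁ F₂ < 2 * a)
    (E : Set (EuclideanSpace ℝ (Fin 2)))
    (hE : E = {P | dist P F₁ + dist P F₂ = 2 * a})
    (A B C : EuclideanSpace ℝ (Fin 2))
    (hA : A ∈ E) (hB : B ∈ E) (hAB : A ≠ B) (hAC : A ≠ C) (hBC : B ≠ C)
    (htanA : ∀ P ∈ E, P ∈ affineSpan ℝ ({A, C} : Set (EuclideanSpace ℝ (Fin 2))) → P = A)
    (htanB : ∀ P ∈ E, P ∈ affineSpan ℝ ({B, C} : Set (EuclideanSpace ℝ (Fin 2))) → P = B) :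
    ∠ A F₁ C = ∠ B F₁ C :=
  stmt_4_general F₁ F₂ a hfoci E hE A B C hA hB hAC hBC htanA htanB
end

section
/- The Funk distance d_F(x,y) = ln(|x-b|/|y-b|) on a bounded open convex domain U — where b is the point where the ray from x through y meets ∂U — satisfies the triangle inequality d_F(x,z) ≤ d_F(x,y) + d_F(y,z), is nonnegative, and vanishes exactly when x = y; but in general d_F(x,y) ≠ d_F(y,x). -/
/-!
Separate the boundary point `b(x,z)` from `U` by a linear functional `f` and put `h = f b(x,z)`.
Along a segment from `x` through `y` to `b`, `f` interpolates linearly, which gives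
`(h - f y) |x - b| = (h - f x) |y - b| + (h - f b) |x - y|`.
As `f ≤ h` on `closure U`, this yields `(h - f x) / (h - f y) ≤ |x - b| / |y - b|`, with equality
for `b = b(x,z)`. The triangle inequality is then the telescoping product
`(h - f x) / (h - f z) = (h - f x) / (h - f y) * ((h - f y) / (h - f z))`.
-/

open AffineMap

section Wbtw

variable {V P : Type*} [NormedAddCommGroup V] [NormedSpace ℝ V] [MetricSpace P]
  [NormedAddTorsor V P] {x y b : P}

theorem Wbtw.sub_apply_mul_dist_eq (f : P →ᵃ[ℝ] ℝ) (c : ℝ) (hw : Wbtw ℝ x y b) :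
    (c - f y) * dist x b = (c - f x) * dist y b + (c - f b) * dist x y := by
  obtain ⟨u, ⟨hu0, hu1⟩, rfl⟩ := hw
  rw [f.apply_lineMap, dist_lineMap_right, dist_left_lineMap, lineMap_apply_ring,
    Real.norm_of_nonneg hu0, Real.norm_of_nonneg (sub_nonneg.2 hu1)]
  ring

theorem Wbtw.div_le_dist_div_dist (f : P →ᵃ[ℝ] ℝ) {c : ℝ} (hw : Wbtw ℝ x y b)
    (hfy : f y < c) (hfb : f b ≤ c) (hyb : y ≠ b) :
    (c - f x) / (c - f y) ≤ dist x b / dist y b := by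
  rw [div_le_div_iff₀ (sub_pos.2 hfy) (dist_pos.2 hyb), mul_comm (dist x b),
    hw.sub_apply_mul_dist_eq f c]
  exact le_add_of_nonneg_right (mul_nonneg (sub_nonneg.2 hfb) dist_nonneg)

theorem Wbtw.div_eq_dist_div_dist (f : P →ᵃ[ℝ] ℝ) (hw : Wbtw ℝ x y b) (hfy : f y < f b)
    (hyb : y ≠ b) :
    (f b - f x) / (f b - f y) = dist x b / dist y b := by
  rw [div_eq_div_iff (sub_pos.2 hfy).ne' (dist_pos.2 hyb).ne', mul_comm (dist x b),
    hw.sub_apply_mul_dist_eq f (f b), sub_self, zero_mul, add_zero]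

theorem Wbtw.one_lt_dist_div_dist (hw : Wbtw ℝ x y b) (hxy : x ≠ y) (hyb : y ≠ b) :
    1 < dist x b / dist y b := by
  rw [one_lt_div (dist_pos.2 hyb), ← hw.dist_add_dist]
  linarith [dist_pos.2 hxy]

end Wbtw

theorem IsOpen.ne_of_mem_of_mem_frontier {X : Type*} [TopologicalSpace X] {U : Set X} {x b : X}
    (hopen : IsOpen U) (hx : x ∈ U) (hb : b ∈ frontier U) : x ≠ b := by
  rintro rfl
  exact (hopen.frontier_eq ▸ hb).2 hx

theorem IsOpen.dist_div_dist_pos {X : Type*} [MetricSpace X] {U : Set X} {x y b : X}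
    (hopen : IsOpen U) (hx : x ∈ U) (hy : y ∈ U) (hb : b ∈ frontier U) :
    0 < dist x b / dist y b :=
  div_pos (dist_pos.2 (hopen.ne_of_mem_of_mem_frontier hx hb))
    (dist_pos.2 (hopen.ne_of_mem_of_mem_frontier hy hb))

section Funk

variable {E : Type*} [NormedAddCommGroup E] [NormedSpace ℝ E] {U : Set E} {x y z b : E}

theorem exists_forall_lt_of_mem_frontier (hconv : Convex ℝ U) (hopen : IsOpen U)
    (hb : b ∈ frontier U) :
    ∃ f : E →L[ℝ] ℝ, (∀ a ∈ U, f a < f b) ∧ ∀ a ∈ closure U, f a ≤ f b := by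
  rw [hopen.frontier_eq] at hb
  obtain ⟨f, hf⟩ := geometric_hahn_banach_open_point hconv hopen hb.2
  refine ⟨f, hf, fun a ha => ?_⟩
  exact closure_lt_subset_le f.continuous continuous_const (closure_mono hf ha)

theorem funk_dist_pos (hopen : IsOpen U) (hy : y ∈ U) (hxy : x ≠ y) (hb : b ∈ frontier U)
    (hw : Wbtw ℝ x y b) :
    0 < Real.log (dist x b / dist y b) :=
  Real.log_pos (hw.one_lt_dist_div_dist hxy (hopen.ne_of_mem_of_mem_frontier hy hb))

theorem funk_dist_triangle (hconv : Convex ℝ U) (hopen : IsOpen U) (hx : x ∈ U) (hy : y ∈ U)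
    (hz : z ∈ U) {bxy byz bxz : E} (hbxy : bxy ∈ frontier U) (hbyz : byz ∈ frontier U)
    (hbxz : bxz ∈ frontier U) (hrxy : Wbtw ℝ x y bxy) (hryz : Wbtw ℝ y z byz)
    (hrxz : Wbtw ℝ x z bxz) :
    Real.log (dist x bxz / dist z bxz) ≤
      Real.log (dist x bxy / dist y bxy) + Real.log (dist y byz / dist z byz) := by
  obtain ⟨f, hfU, hfcl⟩ := exists_forall_lt_of_mem_frontier hconv hopen hbxz
  have hfy := sub_pos.2 (hfU y hy)
  have hfz := sub_pos.2 (hfU z hz)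
  have hsplit : (f bxz - f x) / (f bxz - f y) * ((f bxz - f y) / (f bxz - f z)) =
      dist x bxz / dist z bxz := by
    rw [div_mul_div_cancel₀ hfy.ne']
    exact hrxz.div_eq_dist_div_dist f.toLinearMap.toAffineMap (hfU z hz)
      (hopen.ne_of_mem_of_mem_frontier hz hbxz)
  have hle_xy := hrxy.div_le_dist_div_dist f.toLinearMap.toAffineMap (hfU y hy)
    (hfcl _ (frontier_subset_closure hbxy)) (hopen.ne_of_mem_of_mem_frontier hy hbxy)
  have hle_yz := hryz.div_le_dist_div_dist f.toLinearMap.toAffineMap (hfU z hz)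
    (hfcl _ (frontier_subset_closure hbyz)) (hopen.ne_of_mem_of_mem_frontier hz hbyz)
  have pxy := hopen.dist_div_dist_pos hx hy hbxy
  have pyz := hopen.dist_div_dist_pos hy hz hbyz
  have hprod : dist x bxz / dist z bxz ≤ dist x bxy / dist y bxy * (dist y byz / dist z byz) :=
    hsplit ▸ mul_le_mul hle_xy hle_yz (div_pos hfy hfz).le pxy.le
  rw [← Real.log_mul pxy.ne' pyz.ne']
  exact Real.log_le_log (hopen.dist_div_dist_pos hx hz hbxz) hprod

-- In the unit ball, `d_F(0, e/2) = log 2` but `d_F(e/2, 0) = log (3/2)`.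
theorem exists_funk_dist_ne_swap [Nontrivial E] :
    ∃ V : Set E, Convex ℝ V ∧ IsOpen V ∧ Bornology.IsBounded V ∧
      ∃ x' y' b₁ b₂ : E, x' ∈ V ∧ y' ∈ V ∧ x' ≠ y' ∧
        b₁ ∈ frontier V ∧ b₂ ∈ frontier V ∧ Wbtw ℝ x' y' b₁ ∧ Wbtw ℝ y' x' b₂ ∧
        Real.log (dist x' b₁ / dist y' b₁) ≠ Real.log (dist y' b₂ / dist x' b₂) := by
  obtain ⟨e, he⟩ := exists_norm_eq E zero_le_one
  have hdist : ∀ r s : ℝ, dist (r • e) (s • e) = |r - s| := fun r s => by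
    rw [dist_eq_norm, ← sub_smul, norm_smul, he, mul_one, Real.norm_eq_abs]
  have hsphere : ∀ r : ℝ, r • e ∈ frontier (Metric.ball (0 : E) 1) ↔ |r| = 1 := fun r => by
    rw [frontier_ball _ one_ne_zero, mem_sphere_zero_iff_norm, norm_smul, he, mul_one,
      Real.norm_eq_abs]
  have hball : ∀ r : ℝ, r • e ∈ Metric.ball (0 : E) 1 ↔ |r| < 1 := fun r => by
    rw [mem_ball_zero_iff, norm_smul, he, mul_one, Real.norm_eq_abs]
  have hwbtw : ∀ r s t : ℝ, r ≤ s → s ≤ t → Wbtw ℝ (r • e) (s • e) (t • e) :=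
    fun r s t hrs hst =>
      (Wbtw.of_le_of_le hrs hst).map (LinearMap.toSpanSingleton ℝ E e).toAffineMap
  refine ⟨Metric.ball 0 1, convex_ball 0 1, Metric.isOpen_ball, Metric.isBounded_ball,
    (0 : ℝ) • e, (1 / 2 : ℝ) • e, (1 : ℝ) • e, (-1 : ℝ) • e, (hball 0).2 (by norm_num),
    (hball _).2 (by norm_num), ?_, (hsphere 1).2 (by norm_num), (hsphere _).2 (by norm_num),
    hwbtw _ _ _ (by norm_num) (by norm_num), (hwbtw _ _ _ (by norm_num) (by norm_num)).symm, ?_⟩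
  · rw [← dist_pos, hdist]
    norm_num
  · rw [hdist, hdist, hdist, hdist]
    norm_num
    exact (Real.log_lt_log (by norm_num) (by norm_num)).ne'

end Funk

theorem stmt_10_general (U : Set (EuclideanSpace ℝ (Fin 2))) (hconv : Convex ℝ U)
    (hopen : IsOpen U)
    (x y z : EuclideanSpace ℝ (Fin 2)) (hx : x ∈ U) (hy : y ∈ U) (hz : z ∈ U)
    (hxy : x ≠ y)
    (bxy byz bxz : EuclideanSpace ℝ (Fin 2))
    (hbxy : bxy ∈ frontier U) (hbyz : byz ∈ frontier U) (hbxz : bxz ∈ frontier U)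
    (hrxy : Wbtw ℝ x y bxy) (hryz : Wbtw ℝ y z byz) (hrxz : Wbtw ℝ x z bxz) :
    (Real.log (dist x bxz / dist z bxz) ≤
        Real.log (dist x bxy / dist y bxy) + Real.log (dist y byz / dist z byz)) ∧
    (0 ≤ Real.log (dist x bxy / dist y bxy)) ∧
    (0 < Real.log (dist x bxy / dist y bxy)) ∧
    (∃ (V : Set (EuclideanSpace ℝ (Fin 2))), Convex ℝ V ∧ IsOpen V ∧
      Bornology.IsBounded V ∧
      ∃ (x' y' b₁ b₂ : EuclideanSpace ℝ (Fin 2)), x' ∈ V ∧ y' ∈ V ∧ x' ≠ y' ∧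
        b₁ ∈ frontier V ∧ b₂ ∈ frontier V ∧ Wbtw ℝ x' y' b₁ ∧ Wbtw ℝ y' x' b₂ ∧
        Real.log (dist x' b₁ / dist y' b₁) ≠ Real.log (dist y' b₂ / dist x' b₂)) := by
  have hpos := funk_dist_pos hopen hy hxy hbxy hrxy
  exact ⟨funk_dist_triangle hconv hopen hx hy hz hbxy hbyz hbxz hrxy hryz hrxz, hpos.le, hpos,
    exists_funk_dist_ne_swap⟩

/-- The Funk distance `d_F(x,y) = ln(|x-b|/|y-b|)` on a bounded open convex domain `U`
(`b` the point where the ray from `x` through `y` meets `∂U`) satisfies the triangle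
inequality, is nonnegative, and is positive for `x ≠ y` (so, with `d_F(x,x) = 0`, it
vanishes exactly on the diagonal); but in general it is not symmetric. -/
theorem stmt_10 (U : Set (EuclideanSpace ℝ (Fin 2))) (hconv : Convex ℝ U)
    (hopen : IsOpen U) (hbdd : Bornology.IsBounded U)
    (x y z : EuclideanSpace ℝ (Fin 2)) (hx : x ∈ U) (hy : y ∈ U) (hz : z ∈ U)
    (hxy : x ≠ y) (hyz : y ≠ z) (hxz : x ≠ z)
    (bxy byz bxz : EuclideanSpace ℝ (Fin 2))
    (hbxy : bxy ∈ frontier U) (hbyz : byz ∈ frontier U) (hbxz : bxz ∈ frontier U)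
    (hrxy : Wbtw ℝ x y bxy) (hryz : Wbtw ℝ y z byz) (hrxz : Wbtw ℝ x z bxz) :
    (Real.log (dist x bxz / dist z bxz) ≤
        Real.log (dist x bxy / dist y bxy) + Real.log (dist y byz / dist z byz)) ∧
    (0 ≤ Real.log (dist x bxy / dist y bxy)) ∧
    (0 < Real.log (dist x bxy / dist y bxy)) ∧
    (∃ (V : Set (EuclideanSpace ℝ (Fin 2))), Convex ℝ V ∧ IsOpen V ∧
      Bornology.IsBounded V ∧
      ∃ (x' y' b₁ b₂ : EuclideanSpace ℝ (Fin 2)), x' ∈ V ∧ y' ∈ V ∧ x' ≠ y' ∧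
        b₁ ∈ frontier V ∧ b₂ ∈ frontier V ∧ Wbtw ℝ x' y' b₁ ∧ Wbtw ℝ y' x' b₂ ∧
        Real.log (dist x' b₁ / dist y' b₁) ≠ Real.log (dist y' b₂ / dist x' b₂)) :=
  stmt_10_general U hconv hopen x y z hx hy hz hxy bxy byz bxz hbxy hbyz hbxz hrxy hryz hrxz
end

section
/- Hilbert's metric on the open unit disc coincides with the Beltrami–Klein model of the hyperbolic plane: for points x, y in the open unit disc, d_H(x,y) = (1/2)·ln of the cross-ratio (|y-a|·|x-b|)/(|y-b|·|x-a|) (with a, b the intersections of line xy with the unit circle, in the order a, x, y, b) equals arcosh of (1 - ⟨x,y⟩)/( sqrt(1-|x|²)·sqrt(1-|y|²) ). -/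
/-!
Parametrize the chord through `x` and `y` as `t ↦ lineMap x y t`, so that `a` and `b` sit at
`t = -c` and `t = 1 + c'` with `c, c' > 0`. The function `1 - ‖lineMap x y t‖²` is a quadratic
in `t` with roots `-c` and `1 + c'`, whence `1 - ‖x‖² = |xy|² c (1 + c')`,
`1 - ‖y‖² = |xy|² (1 + c) c'` and `1 - ⟪x, y⟫ = |xy|² ((1 + c)(1 + c') + c c') / 2`.
The cross ratio is `R = (1 + c)(1 + c') / (c c')`, and `cosh (½ log R) = (√R + 1/√R) / 2`
is then exactly the Klein-model expression.
-/

open scoped RealInnerProductSpace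
open AffineMap

section Between

variable {R V P : Type*} [Field R] [LinearOrder R] [IsStrictOrderedRing R]
  [AddCommGroup V] [Module R V] [AddTorsor V P]

theorem Wbtw.exists_eq_lineMap_one_add {x y b : P} (h : Wbtw R x y b) (hxy : x ≠ y) :
    ∃ c : R, 0 ≤ c ∧ b = lineMap x y (1 + c) := by
  obtain ⟨t, ⟨ht0, ht1⟩, rfl⟩ := h
  have ht : t ≠ 0 := by rintro rfl; simp at hxy
  refine ⟨t⁻¹ - 1, sub_nonneg.2 (one_le_inv_iff₀.2 ⟨ht0.lt_of_ne' ht, ht1⟩), ?_⟩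
  simp [inv_mul_cancel₀ ht]

theorem Wbtw.exists_eq_lineMap_neg {a x y : P} (h : Wbtw R a x y) (hxy : x ≠ y) :
    ∃ c : R, 0 ≤ c ∧ a = lineMap x y (-c) := by
  obtain ⟨c, hc, rfl⟩ := (wbtw_comm.1 h).exists_eq_lineMap_one_add hxy.symm
  exact ⟨c, hc, by rw [← lineMap_apply_one_sub]; ring_nf⟩

end Between

theorem quadratic_eq_mul_sub_mul_sub {K : Type*} [CommRing K] [IsDomain K] {A B C r s : K}
    (hrs : r ≠ s) (hr : A * r ^ 2 + B * r + C = 0) (hs : A * s ^ 2 + B * s + C = 0) (t : K) :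
    A * t ^ 2 + B * t + C = A * ((t - r) * (t - s)) := by
  have hB : B = -A * (r + s) := by
    have : (r - s) * (A * (r + s) + B) = 0 := by linear_combination hr - hs
    linear_combination (mul_eq_zero.1 this).resolve_left (sub_ne_zero.2 hrs)
  subst hB
  linear_combination hr

theorem one_sub_norm_lineMap_sq {E : Type*} [NormedAddCommGroup E]
    [InnerProductSpace ℝ E]
    {x y : E} {r s : ℝ} (hr : ‖lineMap x y r‖ = 1) (hs : ‖lineMap x y s‖ = 1) (hrs : r ≠ s)
    (t : ℝ) : 1 - ‖lineMap x y t‖ ^ 2 = dist x y ^ 2 * ((t - r) * (s - t)) := by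
  have expand : ∀ c : ℝ, ‖lineMap x y c‖ ^ 2 - 1 =
      ‖y - x‖ ^ 2 * c ^ 2 + 2 * ⟪x, y - x⟫ * c + (‖x‖ ^ 2 - 1) := fun c => by
    rw [lineMap_apply_module', add_comm, norm_add_sq_real, real_inner_smul_right, norm_smul,
      Real.norm_eq_abs, mul_pow, sq_abs]
    ring
  have := quadratic_eq_mul_sub_mul_sub hrs (by rw [← expand, hr]; norm_num)
    (by rw [← expand, hs]; norm_num) t
  rw [dist_comm, dist_eq_norm]
  linear_combination -(expand t) - this

theorem dist_lineMap_cross_ratio {V P : Type*} [NormedAddCommGroup V] [NormedSpace ℝ V]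
    [MetricSpace P] [NormedAddTorsor V P] {x y : P} (hxy : x ≠ y) {c c' : ℝ} (hc : 0 < c)
    (hc' : 0 < c') :
    dist y (lineMap x y (-c)) * dist x (lineMap x y (1 + c')) /
      (dist y (lineMap x y (1 + c')) * dist x (lineMap x y (-c))) =
      (1 + c) * (1 + c') / (c * c') := by
  have := dist_pos.2 hxy
  simp only [dist_left_lineMap, dist_right_lineMap, Real.norm_eq_abs, sub_neg_eq_add,
    sub_add_cancel_left, abs_neg, abs_of_pos hc, abs_of_pos hc']
  rw [abs_of_pos (by positivity), abs_of_pos (by positivity)]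
  field_simp

theorem Real.cosh_half_log_div {p q : ℝ} (hp : 0 < p) (hq : 0 < q) :
    Real.cosh (1 / 2 * Real.log (p / q)) = (p + q) / (2 * √(p * q)) := by
  have hp' := Real.sqrt_pos.2 hp
  have hq' := Real.sqrt_pos.2 hq
  have : 1 / 2 * Real.log (p / q) = Real.log (√p / √q) := by
    rw [Real.log_div hp'.ne' hq'.ne', Real.log_div hp.ne' hq.ne', Real.log_sqrt hp.le,
      Real.log_sqrt hq.le]
    ring
  rw [this, Real.cosh_log (by positivity), Real.sqrt_mul hp.le]
  field_simp
  rw [Real.sq_sqrt hp.le, Real.sq_sqrt hq.le]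

/-- Hilbert's metric on the open unit disc is the Beltrami–Klein model of the hyperbolic
plane: for `x ≠ y` in the open unit disc, with `a, b` the intersections of the line `xy`
with the unit circle in the order `a, x, y, b`, the Hilbert distance
`d = (1/2) ln((|y-a||x-b|)/(|y-b||x-a|))` satisfies `d = arcosh` of
`(1 - ⟨x,y⟩)/(√(1-|x|²)·√(1-|y|²))`; equivalently (as `d ≥ 0` and `arcosh` is the inverse
of `cosh` on `[0,∞)`), `cosh d` equals that quantity and `d ≥ 0`. -/
theorem stmt_11 (x y : EuclideanSpace ℝ (Fin 2)) (hx : ‖x‖ < 1) (hy : ‖y‖ < 1)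
    (hxy : x ≠ y) (a b : EuclideanSpace ℝ (Fin 2)) (ha : ‖a‖ = 1) (hb : ‖b‖ = 1)
    (horda : Wbtw ℝ a x y) (hordb : Wbtw ℝ x y b) :
    0 ≤ (1 / 2) * Real.log ((dist y a * dist x b) / (dist y b * dist x a)) ∧
    Real.cosh ((1 / 2) * Real.log ((dist y a * dist x b) / (dist y b * dist x a))) =
      (1 - ⟪x, y⟫) / (Real.sqrt (1 - ‖x‖ ^ 2) * Real.sqrt (1 - ‖y‖ ^ 2)) := by
  obtain ⟨c, hc, rfl⟩ := horda.exists_eq_lineMap_neg hxy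
  obtain ⟨c', hc', rfl⟩ := hordb.exists_eq_lineMap_one_add hxy
  have hD : 0 < dist x y := dist_pos.2 hxy
  have chord := one_sub_norm_lineMap_sq ha hb (by linarith)
  have hx' : 1 - ‖x‖ ^ 2 = dist x y ^ 2 * (c * (1 + c')) := by simpa using chord 0
  have hy' : 1 - ‖y‖ ^ 2 = dist x y ^ 2 * ((1 + c) * c') := by simpa using chord 1
  have hc0 : 0 < c := hc.lt_of_ne (by rintro rfl; nlinarith [norm_nonneg x])
  have hc'0 : 0 < c' := hc'.lt_of_ne (by rintro rfl; nlinarith [norm_nonneg y])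
  have hinner : 1 - ⟪x, y⟫ = dist x y ^ 2 * ((1 + c) * (1 + c') + c * c') / 2 := by
    rw [dist_eq_norm] at hx' hy' ⊢
    linear_combination (hx' + hy' - norm_sub_sq_real x y) / 2
  have hsqrt : √(1 - ‖x‖ ^ 2) * √(1 - ‖y‖ ^ 2) =
      dist x y ^ 2 * √((1 + c) * (1 + c') * (c * c')) := by
    rw [hx', hy', ← Real.sqrt_mul (by positivity),
      show dist x y ^ 2 * (c * (1 + c')) * (dist x y ^ 2 * ((1 + c) * c')) =
        (dist x y ^ 2) ^ 2 * ((1 + c) * (1 + c') * (c * c')) by ring,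
      Real.sqrt_mul' _ (by positivity), Real.sqrt_sq (by positivity)]
  have hR : 1 ≤ (1 + c) * (1 + c') / (c * c') := (one_le_div (by positivity)).2 (by nlinarith)
  rw [dist_lineMap_cross_ratio hxy hc0 hc'0,
    Real.cosh_half_log_div (by positivity) (by positivity), hinner, hsqrt]
  refine ⟨mul_nonneg (by norm_num) (Real.log_nonneg hR), ?_⟩
  field_simp
end

section
/- (Existence of n-bounce billiard trajectories) Let γ be a smooth strictly convex closed curve in the plane, let O and A be points strictly inside γ, and let F be a continuous, positively homogeneous length functional on segments satisfying the strict triangle inequality (e.g. a projective Finsler length). Then the function F(x₁,…,xₙ) = len(O x₁) + len(x₁ x₂) + ⋯ + len(xₙ A) on γⁿ attains its maximum, and at any maximum point all consecutive points are distinct: x_i ≠ x_{i+1} for all i (with x₀ = O, x_{n+1} = A). -/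
open scoped BigOperators

/-!
A maximum exists because the frontier of `K` is compact and the path length is continuous.
If two consecutive vertices of a maximizing path coincide, one of them is a free vertex `x j`
whose two incident edges together have length `len P R`, `P` and `R` being its neighbours
(the degenerate edge has length `0`). Moving `x j` to a point `Q` of the frontier off the
segment `[P, R]` turns this into `len P Q + len Q R`, strictly larger by the strict triangle
inequality. Such a `Q` exists because the rays from an interior point in two opposite directions
both meet the frontier, so in dimension at least two the frontier lies in no line.
-/

/-- The total length of the polygonal path `O x₁ … xₙ A` with respect to a length
functional `len` on segments. -/
noncomputable def pathLen {n : ℕ}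
    (len : EuclideanSpace ℝ (Fin 2) → EuclideanSpace ℝ (Fin 2) → ℝ)
    (O A : EuclideanSpace ℝ (Fin 2)) (x : Fin n → EuclideanSpace ℝ (Fin 2)) : ℝ :=
  ∑ i : Fin (n + 1),
    len ((Fin.cons O (Fin.snoc x A) : Fin (n + 2) → EuclideanSpace ℝ (Fin 2)) i.castSucc)
      ((Fin.cons O (Fin.snoc x A) : Fin (n + 2) → EuclideanSpace ℝ (Fin 2)) i.succ)

open Function Set NNReal

section Frontier

variable {E : Type*} [NormedAddCommGroup E] [NormedSpace ℝ E]

theorem exists_pos_add_smul_mem_frontier {K : Set E} (hK : Bornology.IsBounded K) {O : E}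
    (hO : O ∈ interior K) {u : E} (hu : u ≠ 0) :
    ∃ t : ℝ, 0 < t ∧ O + t • u ∈ frontier K := by
  set g : ℝ≥0 → E := fun t => O + (t : ℝ) • u
  have hg : Continuous g := by fun_prop
  obtain ⟨r, hr, hKr⟩ := hK.subset_closedBall_lt 0 O
  have hdist : ∀ t : ℝ≥0, dist (g t) O = t * ‖u‖ := fun t => by
    simp only [g, dist_self_add_left, norm_smul, Real.norm_eq_abs, NNReal.abs_eq]
  have hfar : g ((r + 1) / ‖u‖).toNNReal ∉ K := fun h => by
    have := hKr h
    rw [Metric.mem_closedBall, hdist, Real.coe_toNNReal _ (by positivity),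
      div_mul_cancel₀ _ (norm_ne_zero_iff.2 hu)] at this
    linarith
  have hO' : g 0 ∈ K := by simpa [g] using interior_subset hO
  obtain ⟨t, ht⟩ := (nonempty_frontier_iff (s := g ⁻¹' K)).2
    ⟨⟨0, hO'⟩, fun h => hfar (eq_univ_iff_forall.1 h _)⟩
  have htK : g t ∈ frontier K := hg.frontier_preimage_subset K ht
  refine ⟨t, NNReal.coe_pos.2 (pos_iff_ne_zero.2 ?_), htK⟩
  rintro rfl
  exact disjoint_left.1 disjoint_interior_frontier hO (by simpa [g] using htK)

theorem exists_mem_frontier_notMem_segment (hE : 1 < Module.rank ℝ E) {K : Set E}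
    (hK : Bornology.IsBounded K) {O : E} (hO : O ∈ interior K) (P R : E) :
    ∃ Q ∈ frontier K, Q ∉ segment ℝ P R := by
  have hline : (ℝ ∙ (R - P)) < ⊤ := by
    refine lt_top_iff_ne_top.2 fun h => hE.not_ge ?_
    calc Module.rank ℝ E = Module.rank ℝ (⊤ : Submodule ℝ E) := (rank_top ℝ E).symm
      _ = Module.rank ℝ (ℝ ∙ (R - P)) := by rw [h]
      _ ≤ 1 := (rank_span_le _).trans (by simp)
  obtain ⟨u, -, hu⟩ := SetLike.exists_of_lt hline
  have hu0 : u ≠ 0 := fun h => hu (h ▸ zero_mem _)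
  obtain ⟨a, ha, hQa⟩ := exists_pos_add_smul_mem_frontier hK hO hu0
  obtain ⟨b, hb, hQb⟩ := exists_pos_add_smul_mem_frontier hK hO (neg_ne_zero.2 hu0)
  by_contra! hseg
  rw [segment_eq_image'] at hseg
  obtain ⟨s, -, hs⟩ := hseg _ hQa
  obtain ⟨s', -, hs'⟩ := hseg _ hQb
  -- two points of the segment differ by a multiple of `R - P`, these two by `(a + b) • u`
  have hmem : (a + b) • u ∈ ℝ ∙ (R - P) := Submodule.mem_span_singleton.2 ⟨s - s', by
    calc (s - s') • (R - P) = (P + s • (R - P)) - (P + s' • (R - P)) := by module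
      _ = (a + b) • u := by simp only at hs hs'; rw [hs, hs']; module⟩
  exact hu ((Submodule.smul_mem_iff _ (by positivity)).1 hmem)

end Frontier

section Path

variable {α M : Type*} {n : ℕ}

abbrev pathVertices (O A : α) (x : Fin n → α) : Fin (n + 2) → α :=
  Fin.cons O (Fin.snoc x A)

@[simp]
theorem pathVertices_castSucc_succ (O A : α) (x : Fin n → α) (j : Fin n) :
    pathVertices O A x j.castSucc.succ = x j := by
  simp [pathVertices]

theorem pathVertices_update (O A : α) (x : Fin n → α) (j : Fin n) (Q : α) :
    pathVertices O A (update x j Q) = update (pathVertices O A x) j.castSucc.succ Q := by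
  rw [pathVertices, Fin.snoc_update, Fin.cons_update]

/-- Moving the vertex `v (j + 1)` of a polygonal path to `Q` only changes the two edges
incident to it. -/
theorem sum_edges_update_add [AddCommMonoid M] (f : α → α → M) (v : Fin (n + 2) → α)
    (j : Fin n) (Q : α) :
    (∑ i : Fin (n + 1), f (update v j.castSucc.succ Q i.castSucc)
        (update v j.castSucc.succ Q i.succ)) +
      (f (v j.castSucc.castSucc) (v j.castSucc.succ) + f (v j.castSucc.succ) (v j.succ.succ)) =
    (∑ i : Fin (n + 1), f (v i.castSucc) (v i.succ)) +
      (f (v j.castSucc.castSucc) Q + f Q (v j.succ.succ)) := by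
  classical
  set k := j.castSucc.succ
  set edges : Finset (Fin (n + 1)) := {j.castSucc, j.succ}
  have hne : j.castSucc ≠ j.succ := Fin.castSucc_lt_succ.ne
  have hprev : j.castSucc.castSucc ≠ k := Fin.castSucc_lt_succ.ne
  have hnext : j.succ.succ ≠ k := fun h => hne (Fin.succ_injective _ h).symm
  have hfar : ∀ i ∉ edges, i.castSucc ≠ k ∧ i.succ ≠ k := fun i hi => by
    simp only [edges, Finset.mem_insert, Finset.mem_singleton, not_or] at hi
    exact ⟨fun h => hi.2 (Fin.castSucc_injective _ (h.trans (Fin.succ_castSucc j))),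
      fun h => hi.1 (Fin.succ_injective _ h)⟩
  rw [← Finset.sum_sdiff (Finset.subset_univ edges),
    ← Finset.sum_sdiff (Finset.subset_univ edges), Finset.sum_pair hne, Finset.sum_pair hne,
    Finset.sum_congr rfl fun i hi => by
      rw [update_of_ne (hfar i (Finset.mem_sdiff.1 hi).2).1,
        update_of_ne (hfar i (Finset.mem_sdiff.1 hi).2).2]]
  simp only [k, update_self, update_of_ne hprev, update_of_ne hnext, ← Fin.succ_castSucc]
  abel

theorem Fin.exists_castSucc_eq_or_succ_eq (hn : n ≠ 0) (i : Fin (n + 1)) :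
    ∃ j : Fin n, j.castSucc = i ∨ j.succ = i := by
  rcases Fin.eq_castSucc_or_eq_last i with ⟨j, rfl⟩ | rfl
  · exact ⟨j, Or.inl rfl⟩
  · have hlast : Fin.last n ≠ 0 := fun h => hn (by simpa using congrArg Fin.val h)
    obtain ⟨j, hj⟩ := Fin.exists_succ_eq.2 hlast
    exact ⟨j, Or.inr hj⟩

end Path

section Billiard

local notation "ℝ²" => EuclideanSpace ℝ (Fin 2)

variable {n : ℕ} {len : ℝ² → ℝ² → ℝ}

theorem continuous_pathLen (hcont : Continuous fun q : ℝ² × ℝ² => len q.1 q.2)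
    (O A : ℝ²) : Continuous (pathLen (n := n) len O A) := by
  have hv : Continuous (pathVertices (n := n) O A) :=
    Continuous.finCons (A := fun _ => ℝ²) continuous_const
      (Continuous.finSnoc (A := fun _ => ℝ²) continuous_id continuous_const)
  exact continuous_finsetSum _ fun i _ =>
    hcont.comp
      (((continuous_apply i.castSucc).comp hv).prodMk ((continuous_apply i.succ).comp hv))

theorem pathLen_lt_pathLen_update (hself : ∀ P, len P P = 0)
    (hstri : ∀ P Q R : ℝ², Q ∉ segment ℝ P R → len P R < len P Q + len Q R)
    {O A : ℝ²} {x : Fin n → ℝ²} {j : Fin n} {Q : ℝ²}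
    (hQ : Q ∉ segment ℝ (pathVertices O A x j.castSucc.castSucc)
      (pathVertices O A x j.succ.succ))
    (hdeg : pathVertices O A x j.castSucc.castSucc = pathVertices O A x j.castSucc.succ ∨
      pathVertices O A x j.succ.castSucc = pathVertices O A x j.succ.succ) :
    pathLen len O A x < pathLen len O A (update x j Q) := by
  set P := pathVertices O A x j.castSucc.castSucc
  set R := pathVertices O A x j.succ.succ
  have hsum := sum_edges_update_add len (pathVertices O A x) j Q
  rw [← pathVertices_update, pathVertices_castSucc_succ] at hsum
  change pathLen len O A (update x j Q) + (len P (x j) + len (x j) R) =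
    pathLen len O A x + (len P Q + len Q R) at hsum
  rw [← Fin.succ_castSucc, pathVertices_castSucc_succ] at hdeg
  have hedge : len P (x j) + len (x j) R = len P R := by
    rcases hdeg with h | h <;> simp [h, hself]
  linarith [hstri P Q R hQ]

end Billiard

theorem stmt_12_general (n : ℕ) (hn : 1 ≤ n) (K : Set (EuclideanSpace ℝ (Fin 2)))
    (hKc : IsCompact K)
    (O A : EuclideanSpace ℝ (Fin 2)) (hO : O ∈ interior K)
    (len : EuclideanSpace ℝ (Fin 2) → EuclideanSpace ℝ (Fin 2) → ℝ)
    (hcont : Continuous fun q : EuclideanSpace ℝ (Fin 2) × EuclideanSpace ℝ (Fin 2) =>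
      len q.1 q.2)
    (hhom : ∀ (P Q : EuclideanSpace ℝ (Fin 2)), ∀ s ∈ Set.Icc (0 : ℝ) 1,
      len P (P + s • (Q - P)) = s * len P Q)
    (hstri : ∀ P Q R : EuclideanSpace ℝ (Fin 2), Q ∉ segment ℝ P R →
      len P R < len P Q + len Q R) :
    (∃ x : Fin n → EuclideanSpace ℝ (Fin 2), (∀ i, x i ∈ frontier K) ∧
      ∀ y : Fin n → EuclideanSpace ℝ (Fin 2), (∀ i, y i ∈ frontier K) →
        pathLen len O A y ≤ pathLen len O A x) ∧
    (∀ x : Fin n → EuclideanSpace ℝ (Fin 2), (∀ i, x i ∈ frontier K) →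
      (∀ y : Fin n → EuclideanSpace ℝ (Fin 2), (∀ i, y i ∈ frontier K) →
        pathLen len O A y ≤ pathLen len O A x) →
      ∀ i : Fin (n + 1),
        (Fin.cons O (Fin.snoc x A) : Fin (n + 2) → EuclideanSpace ℝ (Fin 2)) i.castSucc ≠
          (Fin.cons O (Fin.snoc x A) : Fin (n + 2) → EuclideanSpace ℝ (Fin 2)) i.succ) := by
  have hE : 1 < Module.rank ℝ (EuclideanSpace ℝ (Fin 2)) := by
    rw [← Module.finrank_eq_rank, finrank_euclideanSpace_fin]
    norm_num
  have hself : ∀ P, len P P = 0 := fun P => by simpa using hhom P P 0 ⟨le_rfl, zero_le_one⟩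
  refine ⟨?_, fun x hx hmax i hi => ?_⟩
  · have hfr : IsCompact (frontier K) :=
      hKc.of_isClosed_subset isClosed_frontier hKc.isClosed.frontier_subset
    obtain ⟨Q, hQ, -⟩ := exists_mem_frontier_notMem_segment hE hKc.isBounded hO O O
    obtain ⟨x, hx, hmax⟩ := (isCompact_univ_pi fun _ => hfr).exists_isMaxOn
      ⟨fun _ => Q, fun _ _ => hQ⟩ (continuous_pathLen hcont O A).continuousOn
    exact ⟨x, fun i => hx i trivial, fun y hy => hmax fun i _ => hy i⟩
  · obtain ⟨j, hj⟩ := Fin.exists_castSucc_eq_or_succ_eq (by omega) i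
    obtain ⟨Q, hQ, hQseg⟩ := exists_mem_frontier_notMem_segment hE hKc.isBounded hO
      (pathVertices O A x j.castSucc.castSucc) (pathVertices O A x j.succ.succ)
    have hdeg := hj.imp (fun h => h ▸ hi) (fun h => h ▸ hi)
    exact (pathLen_lt_pathLen_update hself hstri hQseg hdeg).not_ge
      (hmax _ ((forall_update_iff x fun _ z => z ∈ frontier K).2 ⟨hQ, fun k _ => hx k⟩))

/-- Existence of `n`-bounce billiard trajectories: for a strictly convex billiard table
with boundary `γ = ∂K`, points `O, A` strictly inside, and a continuous, positively
homogeneous length functional `len` satisfying the (strict) triangle inequality, the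
function `(x₁,…,xₙ) ↦ len(Ox₁)+len(x₁x₂)+⋯+len(xₙA)` on `γⁿ` attains its maximum, and at
any maximum all consecutive points of the path `O x₁ … xₙ A` are distinct. -/
theorem stmt_12 (n : ℕ) (hn : 1 ≤ n) (K : Set (EuclideanSpace ℝ (Fin 2)))
    (hKc : IsCompact K) (hKs : StrictConvex ℝ K)
    (O A : EuclideanSpace ℝ (Fin 2)) (hO : O ∈ interior K) (hA : A ∈ interior K)
    (len : EuclideanSpace ℝ (Fin 2) → EuclideanSpace ℝ (Fin 2) → ℝ)
    (hcont : Continuous fun q : EuclideanSpace ℝ (Fin 2) × EuclideanSpace ℝ (Fin 2) =>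
      len q.1 q.2)
    (hhom : ∀ (P Q : EuclideanSpace ℝ (Fin 2)), ∀ s ∈ Set.Icc (0 : ℝ) 1,
      len P (P + s • (Q - P)) = s * len P Q)
    (htri : ∀ P Q R : EuclideanSpace ℝ (Fin 2), len P R ≤ len P Q + len Q R)
    (hstri : ∀ P Q R : EuclideanSpace ℝ (Fin 2), Q ∉ segment ℝ P R →
      len P R < len P Q + len Q R) :
    (∃ x : Fin n → EuclideanSpace ℝ (Fin 2), (∀ i, x i ∈ frontier K) ∧
      ∀ y : Fin n → EuclideanSpace ℝ (Fin 2), (∀ i, y i ∈ frontier K) →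
        pathLen len O A y ≤ pathLen len O A x) ∧
    (∀ x : Fin n → EuclideanSpace ℝ (Fin 2), (∀ i, x i ∈ frontier K) →
      (∀ y : Fin n → EuclideanSpace ℝ (Fin 2), (∀ i, y i ∈ frontier K) →
        pathLen len O A y ≤ pathLen len O A x) →
      ∀ i : Fin (n + 1),
        (Fin.cons O (Fin.snoc x A) : Fin (n + 2) → EuclideanSpace ℝ (Fin 2)) i.castSucc ≠
          (Fin.cons O (Fin.snoc x A) : Fin (n + 2) → EuclideanSpace ℝ (Fin 2)) i.succ) :=
  stmt_12_general n hn K hKc O A hO len hcont hhom hstri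
end

section
/- In a billiard inside a circle of radius R in the Euclidean plane with source O at distance d < R from the center, the n-th caustic by reflection has exactly four cusps for every n ≥ 1 when d ≠ 0; equivalently, for the one-parameter family of chords obtained from the pencil through O after n reflections, the curve C_n in the (α,p)-cylinder has exactly four inflection-type tangencies with the sine curves p = a sin α - b cos α. -/
/-!
With `S φ = √(R² - d² sin² φ)`, the direction `A` of the `n`-times reflected chord satisfies
`A' = 1 - 2nd cos φ / S` and `A'' = 2nd (R² - d²) sin φ / S³`, and the inflection expression
factors as
`2nd² sin φ cos φ · (3 (S - nd cos φ)² + (n² - 1) d² cos² φ) / S³`.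
Since `S > |d cos φ|`, the last factor is positive for `n ≥ 1` (for `n = 1` it is `3 (S - d cos φ)²`),
so the cusps are exactly the four zeros `φ = kπ/2` of `sin φ cos φ`.
-/

open Real Set

noncomputable section

namespace CircleBilliard

/-- Half the length of the chord through `O` in direction `φ`, which lies at distance
`|d sin φ|` from the centre. -/
def halfChord (R d φ : ℝ) : ℝ := √(R ^ 2 - d ^ 2 * sin φ ^ 2)

def reflectedDirection (R d : ℝ) (n : ℕ) (φ : ℝ) : ℝ := φ + n * (2 * arccos (d * sin φ / R))

def inflectionExpr (A P : ℝ → ℝ) (φ : ℝ) : ℝ :=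
  deriv (deriv P) φ * deriv A φ - deriv P φ * deriv (deriv A) φ + P φ * deriv A φ ^ 3

lemma sin_mul_cos_eq_zero_iff_of_mem_Ico {φ : ℝ} (hφ : φ ∈ Ico 0 (2 * π)) :
    sin φ * cos φ = 0 ↔ ∃ k : ℕ, k < 4 ∧ (k : ℝ) * π / 2 = φ := by
  have hsin : sin φ * cos φ = sin (2 * φ) / 2 := by rw [sin_two_mul]; ring
  rw [hsin, div_eq_zero_iff, or_iff_left two_ne_zero, sin_eq_zero_iff]
  constructor
  · rintro ⟨m, hm⟩
    have hm0 : 0 ≤ m := by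
      have : (0 : ℝ) ≤ m := by nlinarith [pi_pos, hφ.1]
      exact_mod_cast this
    lift m to ℕ using hm0
    refine ⟨m, ?_, by push_cast at hm; linarith⟩
    have : (m : ℝ) < 4 := by push_cast at hm; nlinarith [pi_pos, hφ.2]
    exact_mod_cast this
  · rintro ⟨k, -, rfl⟩
    exact ⟨k, by push_cast; ring⟩

lemma ncard_sin_mul_cos_eq_zero : {φ ∈ Ico 0 (2 * π) | sin φ * cos φ = 0}.ncard = 4 := by
  have hset : {φ ∈ Ico 0 (2 * π) | sin φ * cos φ = 0} =
      (Finset.range 4).image fun k : ℕ => k * π / 2 := by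
    ext φ
    simp only [mem_sep_iff, Finset.coe_image, Finset.coe_range, mem_image, mem_Iio]
    constructor
    · rintro ⟨hφ, h⟩
      exact (sin_mul_cos_eq_zero_iff_of_mem_Ico hφ).1 h
    · rintro ⟨k, hk, rfl⟩
      have hk3 : (k : ℝ) ≤ 3 := by exact_mod_cast Nat.lt_succ_iff.1 hk
      have hφ : (k : ℝ) * π / 2 ∈ Ico 0 (2 * π) :=
        ⟨by positivity, by nlinarith [pi_pos]⟩
      exact ⟨hφ, (sin_mul_cos_eq_zero_iff_of_mem_Ico hφ).2 ⟨k, hk, rfl⟩⟩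
  have hinj : Function.Injective fun k : ℕ => (k : ℝ) * π / 2 := fun a b h => by
    simpa [pi_ne_zero] using h
  rw [hset, ncard_coe_finset, Finset.card_image_of_injective _ hinj, Finset.card_range]

lemma three_mul_sq_sub_mul_add_pos {S c n : ℝ} (hc : |c| < S) (hn : 1 ≤ n) :
    0 < 3 * (S - n * c) ^ 2 + (n ^ 2 - 1) * c ^ 2 := by
  have hn2 : 0 ≤ (n ^ 2 - 1) * c ^ 2 := mul_nonneg (by nlinarith) (sq_nonneg c)
  rcases (sq_nonneg (S - n * c)).lt_or_eq with h | h
  · linarith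
  · have hS : S = n * c := by nlinarith
    have hc0 : 0 < c := by nlinarith [neg_abs_le c]
    have hn1 : 1 < n := by nlinarith [le_abs_self c]
    nlinarith [mul_pos (by linarith : 0 < n - 1) hc0]

variable {R d : ℝ}

lemma sq_sub_sq_mul_sin_sq_pos (hdR : |d| < R) (φ : ℝ) : 0 < R ^ 2 - d ^ 2 * sin φ ^ 2 := by
  have hd2 : d ^ 2 < R ^ 2 := by nlinarith [sq_abs d, abs_nonneg d]
  nlinarith [sin_sq_le_one φ, sq_nonneg d]

lemma halfChord_pos (hdR : |d| < R) (φ : ℝ) : 0 < halfChord R d φ :=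
  sqrt_pos.2 (sq_sub_sq_mul_sin_sq_pos hdR φ)

lemma halfChord_sq (hdR : |d| < R) (φ : ℝ) : halfChord R d φ ^ 2 = R ^ 2 - d ^ 2 * sin φ ^ 2 :=
  sq_sqrt (sq_sub_sq_mul_sin_sq_pos hdR φ).le

lemma abs_mul_cos_lt_halfChord (hdR : |d| < R) (φ : ℝ) : |d * cos φ| < halfChord R d φ := by
  refine abs_lt_of_sq_lt_sq ?_ (halfChord_pos hdR φ).le
  have hd2 : d ^ 2 < R ^ 2 := by nlinarith [sq_abs d, abs_nonneg d]
  rw [halfChord_sq hdR, mul_pow]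
  nlinarith [sin_sq_add_cos_sq φ, sin_sq_le_one φ]

lemma abs_mul_sin_div_lt_one (hdR : |d| < R) (φ : ℝ) : |d * sin φ / R| < 1 := by
  have hR : 0 < R := (abs_nonneg d).trans_lt hdR
  rw [abs_div, abs_of_pos hR, div_lt_one hR, abs_mul]
  calc |d| * |sin φ| ≤ |d| * 1 := by gcongr; exact abs_sin_le_one φ
    _ < R := by rwa [mul_one]

lemma hasDerivAt_halfChord (hdR : |d| < R) (φ : ℝ) :
    HasDerivAt (halfChord R d) (-(d ^ 2 * sin φ * cos φ) / halfChord R d φ) φ := by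
  have h := (((hasDerivAt_sin φ).fun_pow 2).const_mul (d ^ 2)).const_sub (R ^ 2) |>.sqrt
    (sq_sub_sq_mul_sin_sq_pos hdR φ).ne'
  refine h.congr_deriv ?_
  have := (halfChord_pos hdR φ).ne'
  simp only [halfChord] at this ⊢
  field_simp
  ring

lemma hasDerivAt_reflectedDirection (hdR : |d| < R) (n : ℕ) (φ : ℝ) :
    HasDerivAt (reflectedDirection R d n) (1 - 2 * n * d * cos φ / halfChord R d φ) φ := by
  have hR : 0 < R := (abs_nonneg d).trans_lt hdR
  have hu := abs_lt.1 (abs_mul_sin_div_lt_one hdR φ)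
  have harc := (hasDerivAt_arccos hu.1.ne' hu.2.ne).comp φ
    (((hasDerivAt_sin φ).const_mul d).div_const R)
  refine ((hasDerivAt_id φ).add ((harc.const_mul 2).const_mul (n : ℝ))).congr_deriv ?_
  have hsqrt : √(1 - (d * sin φ / R) ^ 2) = halfChord R d φ / R := by
    rw [show 1 - (d * sin φ / R) ^ 2 = (R ^ 2 - d ^ 2 * sin φ ^ 2) / R ^ 2 by field_simp,
      sqrt_div (sq_sub_sq_mul_sin_sq_pos hdR φ).le, sqrt_sq hR.le, halfChord]
  have := (halfChord_pos hdR φ).ne'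
  rw [hsqrt]
  field_simp
  ring

lemma deriv_reflectedDirection (hdR : |d| < R) (n : ℕ) :
    deriv (reflectedDirection R d n) = fun φ => 1 - 2 * n * d * cos φ / halfChord R d φ :=
  funext fun φ => (hasDerivAt_reflectedDirection hdR n φ).deriv

lemma deriv_deriv_reflectedDirection (hdR : |d| < R) (n : ℕ) (φ : ℝ) :
    deriv (deriv (reflectedDirection R d n)) φ =
      2 * n * d * (R ^ 2 - d ^ 2) * sin φ / halfChord R d φ ^ 3 := by
  rw [deriv_reflectedDirection hdR]
  refine (((hasDerivAt_cos φ).const_mul (2 * n * d)).div (hasDerivAt_halfChord hdR φ)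
    (halfChord_pos hdR φ).ne' |>.const_sub 1).deriv.trans ?_
  have := (halfChord_pos hdR φ).ne'
  field_simp
  linear_combination ((n : ℝ) * d * sin φ) * halfChord_sq hdR φ -
    ((n : ℝ) * d ^ 3 * sin φ) * sin_sq_add_cos_sq φ

lemma inflectionExpr_reflectedDirection (hdR : |d| < R) (n : ℕ) (φ : ℝ) :
    inflectionExpr (reflectedDirection R d n) (fun φ => -d * sin φ) φ =
      2 * n * d ^ 2 * (sin φ * cos φ) *
        (3 * (halfChord R d φ - n * (d * cos φ)) ^ 2 + ((n : ℝ) ^ 2 - 1) * (d * cos φ) ^ 2) /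
        halfChord R d φ ^ 3 := by
  have hP : deriv (fun φ => -d * sin φ) = fun φ => -d * cos φ := by
    ext; simp
  have hP' : deriv (fun φ => -d * cos φ) φ = d * sin φ := by simp
  rw [inflectionExpr, hP, hP', deriv_deriv_reflectedDirection hdR, deriv_reflectedDirection hdR]
  have := (halfChord_pos hdR φ).ne'
  field_simp
  linear_combination (-2 * (n : ℝ) * d ^ 2 * sin φ * cos φ) * halfChord_sq hdR φ +
    (2 * (n : ℝ) * d ^ 4 * sin φ * cos φ) * sin_sq_add_cos_sq φ

lemma inflectionExpr_reflectedDirection_eq_zero_iff (hd : d ≠ 0) (hdR : |d| < R) {n : ℕ}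
    (hn : 1 ≤ n) (φ : ℝ) :
    inflectionExpr (reflectedDirection R d n) (fun φ => -d * sin φ) φ = 0 ↔
      sin φ * cos φ = 0 := by
  have hn' : (1 : ℝ) ≤ n := by exact_mod_cast hn
  have hcoeff : 2 * (n : ℝ) * d ^ 2 ≠ 0 := by positivity
  have hfactor := (three_mul_sq_sub_mul_add_pos (abs_mul_cos_lt_halfChord hdR φ) hn').ne'
  have hS := pow_ne_zero 3 (halfChord_pos hdR φ).ne'
  rw [inflectionExpr_reflectedDirection hdR]
  simp only [div_eq_zero_iff, mul_eq_zero, hcoeff, hfactor, hS, false_or, or_false]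

end CircleBilliard

end

/-- Exactly four cusps for caustics by reflection in a circle: for the billiard in a circle
of radius `R` with source `O` at distance `d` from the center, `0 < d < R`, the chord
through `O` with direction angle `φ` has line coordinates `p = -d sin φ`, and after each
reflection the direction rotates by the central angle `2 arccos(d sin φ / R)` while `p` is
preserved; so the `n`-times reflected family is `C_n(φ) = (φ + n·2·arccos(d sin φ / R),
-d sin φ)` in the `(α,p)`-cylinder. Cusps of the `n`-th caustic correspond to inflection
tangencies of `C_n` with the sine curves `p = a sin α - b cos α`, i.e. (parametrically) to
zeros of `p''·α' - p'·α'' + p·(α')³`. For every `n ≥ 1` there are exactly four such points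
per period. -/
theorem stmt_16 (R d : ℝ) (hd : 0 < d) (hdR : d < R) (n : ℕ) (hn : 1 ≤ n) :
    let A : ℝ → ℝ := fun φ => φ + (n : ℝ) * (2 * Real.arccos (d * Real.sin φ / R))
    let P : ℝ → ℝ := fun φ => -d * Real.sin φ
    let E : ℝ → ℝ := fun φ =>
      deriv (deriv P) φ * deriv A φ - deriv P φ * deriv (deriv A) φ +
        P φ * (deriv A φ) ^ 3
    {φ ∈ Set.Ico 0 (2 * Real.pi) | E φ = 0}.ncard = 4 := by
  intro A P E
  have hzero : ∀ φ, E φ = 0 ↔ Real.sin φ * Real.cos φ = 0 :=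
    CircleBilliard.inflectionExpr_reflectedDirection_eq_zero_iff hd.ne'
      (by rwa [abs_of_pos hd]) hn
  simp only [hzero]
  exact CircleBilliard.ncard_sin_mul_cos_eq_zero
end

section
/- For a Minkowski (projective Finsler) metric on ℝ² given by a norm N, the billiard reflection at a boundary point with tangent line T is characterized by: N(u) = N(v) = 1 and the linear functional w = dN(u) - dN(v) (difference of the Legendre transforms/supporting functionals of the indicatrix at u and v) vanishes on the direction of T. Equivalently, u - v is conjugate to T: the supporting hyperplanes of the unit ball {N ≤ 1} at u and v intersect in a point lying on the line through the origin parallel to T (or are both parallel to T). -/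
/-!
By Euler's identity for the positively homogeneous gauge, `dN(u) u = N u = 1` and
`dN(v) v = 1`, so the two tangent lines of the indicatrix are the level sets `{dN(u) = 1}` and
`{dN(v) = 1}`. A point `s • τ` lies on both exactly when `s * dN(u) τ = 1 = s * dN(v) τ`, and
such an `s` exists, or both functionals vanish on `τ`, exactly when `dN(u) τ = dN(v) τ`.
-/

section Euler

variable {E F : Type*} [NormedAddCommGroup E] [NormedSpace ℝ E]
  [NormedAddCommGroup F] [NormedSpace ℝ F]

theorem map_zero_of_pos_homogeneous {f : E → F} (hhom : ∀ s : ℝ, 0 < s → f (s • 0) = s • f 0) :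
    f 0 = 0 := by
  have h := hhom 2 two_pos
  rw [smul_zero, two_smul, left_eq_add] at h
  exact h

theorem fderiv_apply_self_of_pos_homogeneous {f : E → F} {x : E} (hf : DifferentiableAt ℝ f x)
    (hhom : ∀ s : ℝ, 0 < s → f (s • x) = s • f x) :
    fderiv ℝ f x x = f x := by
  have hray : HasDerivAt (fun t : ℝ => f (t • x)) (fderiv ℝ f x x) 1 := by
    have hline : HasDerivAt (fun t : ℝ => t • x) x 1 := by
      simpa using (hasDerivAt_id (1 : ℝ)).smul_const x
    have hf' : HasFDerivAt f (fderiv ℝ f x) ((1 : ℝ) • x) := by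
      rw [one_smul]
      exact hf.hasFDerivAt
    exact hf'.comp_hasDerivAt 1 hline
  have hray_eq : (fun t : ℝ => f (t • x)) =ᶠ[nhds 1] fun t => t • f x :=
    eventually_gt_nhds one_pos |>.mono fun t ht => hhom t ht
  simpa using (hray.congr_of_eventuallyEq hray_eq.symm).unique
    ((hasDerivAt_id (1 : ℝ)).smul_const (f x))

end Euler

theorem Module.Dual.sub_apply_eq_zero_iff_concurrent {K M : Type*} [Field K] [AddCommGroup M]
    [Module K M] {a b : Module.Dual K M} {u v : M} (hau : a u = 1) (hbv : b v = 1) (τ : M) :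
    a τ - b τ = 0 ↔
      (∃ (z : M) (s : K), z = s • τ ∧ a (z - u) = 0 ∧ b (z - v) = 0) ∨ (a τ = 0 ∧ b τ = 0) := by
  have hline : ∀ s : K, a (s • τ - u) = 0 ↔ s * a τ = 1 := fun s => by
    rw [map_sub, map_smul, hau, smul_eq_mul, sub_eq_zero]
  have hline' : ∀ s : K, b (s • τ - v) = 0 ↔ s * b τ = 1 := fun s => by
    rw [map_sub, map_smul, hbv, smul_eq_mul, sub_eq_zero]
  rw [sub_eq_zero]
  constructor
  · intro heq
    by_cases haτ : a τ = 0
    · exact Or.inr ⟨haτ, heq ▸ haτ⟩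
    · refine Or.inl ⟨_, (a τ)⁻¹, rfl, (hline _).2 (inv_mul_cancel₀ haτ), (hline' _).2 ?_⟩
      rw [← heq, inv_mul_cancel₀ haτ]
  · rintro (⟨-, s, rfl, has, hbs⟩ | ⟨haτ, hbτ⟩)
    · rw [hline] at has
      rw [hline'] at hbs
      exact mul_left_cancel₀ (left_ne_zero_of_mul_eq_one has) (has.trans hbs.symm)
    · rw [haτ, hbτ]

theorem stmt_19_general (N : EuclideanSpace ℝ (Fin 2) → ℝ)
    (hsm : ∀ x : EuclideanSpace ℝ (Fin 2), x ≠ 0 → DifferentiableAt ℝ N x)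
    (hgauge : ∀ (s : ℝ) (x : EuclideanSpace ℝ (Fin 2)), 0 < s → N (s • x) = s * N x)
    (u v τ : EuclideanSpace ℝ (Fin 2))
    (hu : N u = 1) (hv : N v = 1) :
    (fderiv ℝ N u τ - fderiv ℝ N v τ = 0) ↔
      ((∃ (z : EuclideanSpace ℝ (Fin 2)) (s : ℝ), z = s • τ ∧
          fderiv ℝ N u (z - u) = 0 ∧ fderiv ℝ N v (z - v) = 0) ∨
        (fderiv ℝ N u τ = 0 ∧ fderiv ℝ N v τ = 0)) := by
  have hN0 : N 0 = 0 := map_zero_of_pos_homogeneous fun s hs => hgauge s 0 hs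
  have euler_unit : ∀ x, N x = 1 → fderiv ℝ N x x = 1 := fun x hx => by
    have hx0 : x ≠ 0 := by rintro rfl; simp [hN0] at hx
    rw [fderiv_apply_self_of_pos_homogeneous (hsm x hx0) fun s hs => hgauge s x hs, hx]
  exact Module.Dual.sub_apply_eq_zero_iff_concurrent (a := (fderiv ℝ N u : _ →ₗ[ℝ] ℝ))
    (b := (fderiv ℝ N v : _ →ₗ[ℝ] ℝ)) (euler_unit u hu) (euler_unit v hv) τ

/-- Equivalence of the variational and geometric descriptions of the Minkowski (projective
Finsler) billiard reflection in the plane. Let `N` be a smooth, strictly convex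
(possibly non-symmetric) gauge, `u, v` unit vectors (`N(u) = N(v) = 1`), and `τ ≠ 0` a
direction vector of the boundary tangent line `T`. The variational reflection law — the
functional `w = dN(u) - dN(v)` vanishes on the direction of `T` — holds if and only if the
supporting (tangent) lines of the indicatrix `{N = 1}` at `u` and at `v` meet at a point
on the line through the origin parallel to `T`, or are both parallel to `T`. -/
theorem stmt_19 (N : EuclideanSpace ℝ (Fin 2) → ℝ)
    (hsm : ∀ x : EuclideanSpace ℝ (Fin 2), x ≠ 0 → DifferentiableAt ℝ N x)
    (hgauge : ∀ (s : ℝ) (x : EuclideanSpace ℝ (Fin 2)), 0 < s → N (s • x) = s * N x)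
    (hconv : StrictConvex ℝ {x : EuclideanSpace ℝ (Fin 2) | N x ≤ 1})
    (hpos : ∀ x : EuclideanSpace ℝ (Fin 2), x ≠ 0 → 0 < N x)
    (u v τ : EuclideanSpace ℝ (Fin 2)) (hτ : τ ≠ 0) (huv : u ≠ v)
    (hu : N u = 1) (hv : N v = 1) :
    (fderiv ℝ N u τ - fderiv ℝ N v τ = 0) ↔
      ((∃ (z : EuclideanSpace ℝ (Fin 2)) (s : ℝ), z = s • τ ∧
          fderiv ℝ N u (z - u) = 0 ∧ fderiv ℝ N v (z - v) = 0) ∨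
        (fderiv ℝ N u τ = 0 ∧ fderiv ℝ N v τ = 0)) :=
  stmt_19_general N hsm hgauge u v τ hu hv
end
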